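/- arXiv:2512.00788 — 7 statements merged into one kernel-verified Lean document; each statement's English description precedes it below -/
import Mathlib

section
/- Let N be a natural number, let ι and κ be finite index types, let S_B : ι → Finset (Fin N), S_C : κ → Finset (Fin N), and let h : ι → Matrix n n ℂ and h' : κ → Matrix n n ℂ be families of matrices such that Commute (h a) (h' b) whenever S_B a ∩ S_C b = ∅. Suppose g_B, g_C ≥ 0 satisfy: for every site i : Fin N, ∑_{a : i ∈ S_B a} ‖h a‖ ≤ g_B and ∑_{b : i ∈ S_C b} ‖h' b‖ ≤ g_C. Then ‖⁅∑_a h a, ∑_b h' b⁆‖ ≤ 2 * N * g_B * g_C. In particular, if both Hamiltonians are g-extensive with g of order one, the maximal instantaneous charging power can scale at most extensively with system size, irrespective of the interaction order. -/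
open Finset
open scoped Matrix.Norms.L2Operator

/-!
Expanding the commutator bilinearly, a pair `(a, b)` contributes at most `2 ‖h a‖ ‖h' b‖`, and
nothing unless the supports share a site; so its contribution is bounded by
`2 ‖h a‖ ‖h' b‖ · #(S_B a ∩ S_C b)`. Counting the shared sites the other way round turns the
total into `2 ∑ᵢ (∑_{a ∋ i} ‖h a‖) (∑_{b ∋ i} ‖h' b‖) ≤ 2 N g_B g_C`.
-/

theorem lie_sum_sum {R ι κ : Type*} [Ring R] (s : Finset ι) (t : Finset κ) (f : ι → R)
    (g : κ → R) : ⁅∑ a ∈ s, f a, ∑ b ∈ t, g b⁆ = ∑ a ∈ s, ∑ b ∈ t, ⁅f a, g b⁆ := by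
  rw [Ring.lie_def, sum_mul_sum, sum_mul_sum, sum_comm (s := t), ← sum_sub_distrib]
  simp only [← sum_sub_distrib, Ring.lie_def]

theorem norm_lie_le {R : Type*} [NormedRing R] (x y : R) : ‖⁅x, y⁆‖ ≤ 2 * ‖x‖ * ‖y‖ :=
  calc ‖⁅x, y⁆‖ ≤ ‖x * y‖ + ‖y * x‖ := by rw [Ring.lie_def]; exact norm_sub_le _ _
    _ ≤ ‖x‖ * ‖y‖ + ‖y‖ * ‖x‖ := add_le_add (norm_mul_le x y) (norm_mul_le y x)
    _ = 2 * ‖x‖ * ‖y‖ := by ring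

theorem norm_lie_le_mul_card_inter {R σ : Type*} [NormedRing R] [DecidableEq σ] {x y : R}
    {s t : Finset σ} (hcomm : Disjoint s t → Commute x y) :
    ‖⁅x, y⁆‖ ≤ 2 * ‖x‖ * ‖y‖ * #(s ∩ t) := by
  by_cases hst : Disjoint s t
  · rw [(hcomm hst).lie_eq, norm_zero]
    positivity
  · have hcard : (1 : ℝ) ≤ #(s ∩ t) := by
      exact_mod_cast card_pos.mpr (not_disjoint_iff_nonempty_inter.mp hst)
    calc ‖⁅x, y⁆‖ ≤ 2 * ‖x‖ * ‖y‖ := norm_lie_le x y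
      _ ≤ 2 * ‖x‖ * ‖y‖ * #(s ∩ t) := le_mul_of_one_le_right (by positivity) hcard

theorem sum_sum_mul_card_inter {σ ι κ : Type*} [Fintype σ] [DecidableEq σ]
    [Fintype ι] [Fintype κ] (S : ι → Finset σ) (T : κ → Finset σ) (u : ι → ℝ) (v : κ → ℝ) :
    ∑ a, ∑ b, u a * v b * #(S a ∩ T b) =
      ∑ i, (∑ a with i ∈ S a, u a) * (∑ b with i ∈ T b, v b) := by
  have hcard (a : ι) (b : κ) :
      u a * v b * #(S a ∩ T b) = ∑ i, if i ∈ S a ∧ i ∈ T b then u a * v b else 0 := by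
    rw [← sum_filter, sum_const, nsmul_eq_mul, mul_comm, filter_and, filter_mem_eq_inter,
      filter_mem_eq_inter, univ_inter, univ_inter]
  simp only [hcard, sum_filter, sum_mul_sum, ite_zero_mul_ite_zero]
  conv_rhs => rw [sum_comm]
  exact sum_congr rfl fun a _ => sum_comm

theorem norm_lie_sum_le {R σ ι κ : Type*} [NormedRing R] [Fintype σ] [DecidableEq σ]
    [Fintype ι] [Fintype κ] (S : ι → Finset σ) (T : κ → Finset σ) (f : ι → R) (g : κ → R)
    (hcomm : ∀ a b, Disjoint (S a) (T b) → Commute (f a) (g b)) :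
    ‖⁅∑ a, f a, ∑ b, g b⁆‖ ≤
      2 * ∑ i, (∑ a with i ∈ S a, ‖f a‖) * (∑ b with i ∈ T b, ‖g b‖) :=
  calc ‖⁅∑ a, f a, ∑ b, g b⁆‖ = ‖∑ a, ∑ b, ⁅f a, g b⁆‖ := by rw [lie_sum_sum]
    _ ≤ ∑ a, ∑ b, ‖⁅f a, g b⁆‖ :=
      (norm_sum_le _ _).trans (sum_le_sum fun a _ => norm_sum_le _ _)
    _ ≤ ∑ a, ∑ b, 2 * (‖f a‖ * ‖g b‖ * #(S a ∩ T b)) := by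
      gcongr with a _ b _
      linarith [norm_lie_le_mul_card_inter (hcomm a b)]
    _ = 2 * ∑ i, (∑ a with i ∈ S a, ‖f a‖) * (∑ b with i ∈ T b, ‖g b‖) := by
      simp only [← mul_sum, sum_sum_mul_card_inter]

theorem commutator_le_of_g_extensive_general
    (N : ℕ) {n : Type*} [Fintype n] [DecidableEq n]
    (ι κ : Type*) [Fintype ι] [Fintype κ]
    (S_B : ι → Finset (Fin N)) (S_C : κ → Finset (Fin N))
    (h : ι → Matrix n n ℂ) (h' : κ → Matrix n n ℂ)
    (hcomm : ∀ a b, S_B a ∩ S_C b = ∅ → Commute (h a) (h' b))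
    (g_B g_C : ℝ)
    (hB : ∀ i : Fin N, ∑ a ∈ Finset.univ.filter (fun a => i ∈ S_B a), ‖h a‖ ≤ g_B)
    (hC : ∀ i : Fin N, ∑ b ∈ Finset.univ.filter (fun b => i ∈ S_C b), ‖h' b‖ ≤ g_C) :
    ‖⁅∑ a, h a, ∑ b, h' b⁆‖ ≤ 2 * N * g_B * g_C :=
  calc ‖⁅∑ a, h a, ∑ b, h' b⁆‖
      ≤ 2 * ∑ i, (∑ a with i ∈ S_B a, ‖h a‖) * (∑ b with i ∈ S_C b, ‖h' b‖) :=
        norm_lie_sum_le S_B S_C h h' fun a b hd => hcomm a b (disjoint_iff_inter_eq_empty.mp hd)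
    _ ≤ 2 * ∑ _i : Fin N, g_B * g_C := by
        refine mul_le_mul_of_nonneg_left (sum_le_sum fun i _ => ?_) zero_le_two
        exact mul_le_mul (hB i) (hC i) (sum_nonneg fun b _ => norm_nonneg _)
          ((sum_nonneg fun a _ => norm_nonneg _).trans (hB i))
    _ = 2 * N * g_B * g_C := by
        rw [sum_const, card_univ, Fintype.card_fin, nsmul_eq_mul]
        ring

/-- If the battery terms `h a` (supported on `S_B a`) and charger
terms `h' b` (supported on `S_C b`) commute whenever their supports are disjoint,
and both Hamiltonians are `g`-extensive with constants `g_B`, `g_C`, then the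
commutator of the total Hamiltonians is bounded by `2 * N * g_B * g_C`; hence the
maximal instantaneous charging power scales at most extensively with system size. -/
theorem commutator_le_of_g_extensive
    (N : ℕ) {n : Type*} [Fintype n] [DecidableEq n] [Nonempty n]
    (ι κ : Type*) [Fintype ι] [Fintype κ]
    (S_B : ι → Finset (Fin N)) (S_C : κ → Finset (Fin N))
    (h : ι → Matrix n n ℂ) (h' : κ → Matrix n n ℂ)
    (hcomm : ∀ a b, S_B a ∩ S_C b = ∅ → Commute (h a) (h' b))
    (g_B g_C : ℝ) (hgB : 0 ≤ g_B) (hgC : 0 ≤ g_C)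
    (hB : ∀ i : Fin N, ∑ a ∈ Finset.univ.filter (fun a => i ∈ S_B a), ‖h a‖ ≤ g_B)
    (hC : ∀ i : Fin N, ∑ b ∈ Finset.univ.filter (fun b => i ∈ S_C b), ‖h' b‖ ≤ g_C) :
    ‖⁅∑ a, h a, ∑ b, h' b⁆‖ ≤ 2 * N * g_B * g_C :=
  commutator_le_of_g_extensive_general N ι κ S_B S_C h h' hcomm g_B g_C hB hC
end

section
/- Let H be a Hermitian matrix in Matrix n n ℂ, let A be any matrix in Matrix n n ℂ, let λ ≥ 0 be real, and let (μ, u) and (ν, v) be eigenpairs of H, i.e. H.mulVec u = (μ:ℂ) • u and H.mulVec v = (ν:ℂ) • v with μ, ν : ℝ. Then |star u ⬝ᵥ (A.mulVec v)| ≤ Real.exp (-λ * (μ - ν)) * ‖Matrix.exp (λ • H) * A * Matrix.exp ((-λ) • H)‖ * ‖u‖ * ‖v‖. -/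
/-!
The exponentials `e^{λH}` and `e^{-λH}` act on the eigenvectors `u` and `v` of `H` as the scalars
`e^{λμ}` and `e^{-λν}`, and `e^{λH}` is self-adjoint, so
`⟨u, e^{λH} A e^{-λH} v⟩ = e^{λ(μ-ν)} ⟨u, A v⟩`. Bounding the left-hand side by Cauchy–Schwarz and
the operator norm gives the estimate.
-/

open scoped Matrix.Norms.L2Operator
open scoped Matrix

namespace Matrix

variable {𝕂 : Type*} [RCLike 𝕂] {n : Type*} [Fintype n] [DecidableEq n]

theorem pow_mulVec_of_mulVec_eq_smul {R : Type*} [CommSemiring R] {M : Matrix n n R} {c : R}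
    {v : n → R} (h : M *ᵥ v = c • v) (k : ℕ) : (M ^ k) *ᵥ v = c ^ k • v := by
  induction k with
  | zero => simp
  | succ k ih => rw [pow_succ, ← mulVec_mulVec, h, mulVec_smul, ih, smul_smul, pow_succ']

theorem exp_mulVec_of_mulVec_eq_smul {M : Matrix n n 𝕂} {c : 𝕂} {v : n → 𝕂}
    (h : M *ᵥ v = c • v) : NormedSpace.exp M *ᵥ v = NormedSpace.exp c • v := by
  have hM : HasSum (fun k : ℕ => ((k.factorial⁻¹ : 𝕂) • M ^ k) *ᵥ v) (NormedSpace.exp M *ᵥ v) :=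
    (NormedSpace.exp_series_hasSum_exp' M).map (mulVec.addMonoidHomLeft v)
      (continuous_id.matrix_mulVec continuous_const)
  have hc : HasSum (fun k : ℕ => ((k.factorial⁻¹ : 𝕂) • c ^ k) • v) (NormedSpace.exp c • v) :=
    (NormedSpace.exp_series_hasSum_exp' c).smul_const v
  refine hM.unique ?_
  simpa only [smul_mulVec, pow_mulVec_of_mulVec_eq_smul h, smul_smul, smul_eq_mul] using hc

theorem exp_smul_mulVec_of_mulVec_eq_smul {M : Matrix n n 𝕂} {c : 𝕂} {v : n → 𝕂}
    (h : M *ᵥ v = c • v) (t : 𝕂) : NormedSpace.exp (t • M) *ᵥ v = NormedSpace.exp (t * c) • v :=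
  exp_mulVec_of_mulVec_eq_smul (by rw [smul_mulVec, h, smul_smul])

omit [DecidableEq n] in
theorem star_dotProduct_mul_mul_mulVec {R : Type*} [CommSemiring R] [StarRing R]
    {P A Q : Matrix n n R} {u v : n → R} {a b : R}
    (hP : Pᴴ *ᵥ u = a • u) (hQ : Q *ᵥ v = b • v) :
    star u ⬝ᵥ (P * A * Q) *ᵥ v = star a * b * (star u ⬝ᵥ A *ᵥ v) := by
  have hu : star u ᵥ* P = star a • star u := by
    rw [← conjTranspose_conjTranspose P, ← star_mulVec, hP, star_smul]
  rw [← mulVec_mulVec, hQ, mulVec_smul, ← mulVec_mulVec, dotProduct_smul, dotProduct_mulVec, hu,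
    smul_dotProduct, smul_eq_mul, smul_eq_mul]
  ring

theorem norm_star_dotProduct_mulVec_le {m : Type*} [Fintype m] (B : Matrix m n 𝕂) (u : m → 𝕂)
    (v : n → 𝕂) :
    ‖star u ⬝ᵥ B *ᵥ v‖
      ≤ ‖B‖ * ‖(WithLp.equiv 2 (m → 𝕂)).symm u‖ * ‖(WithLp.equiv 2 (n → 𝕂)).symm v‖ := by
  have h := norm_inner_le_norm (𝕜 := 𝕂) ((WithLp.equiv 2 (m → 𝕂)).symm u)
    ((WithLp.equiv 2 (m → 𝕂)).symm (B *ᵥ v))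
  calc ‖star u ⬝ᵥ B *ᵥ v‖ ≤ _ := (congrArg norm (dotProduct_comm _ _)).trans_le h
    _ ≤ ‖(WithLp.equiv 2 (m → 𝕂)).symm u‖ * (‖B‖ * ‖(WithLp.equiv 2 (n → 𝕂)).symm v‖) := by
      gcongr
      exact B.l2_opNorm_mulVec _
    _ = _ := by ring

end Matrix

theorem transition_exponential_tilt_general
    {n : Type*} [Fintype n] [DecidableEq n]
    (H A : Matrix n n ℂ) (hH : H.IsHermitian)
    (lam : ℝ)
    (μ ν : ℝ) (u v : n → ℂ)
    (hu : H.mulVec u = (μ : ℂ) • u) (hv : H.mulVec v = (ν : ℂ) • v) :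
    ‖star u ⬝ᵥ A.mulVec v‖
      ≤ Real.exp (-lam * (μ - ν))
          * ‖NormedSpace.exp (lam • H) * A * NormedSpace.exp ((-lam) • H)‖
          * ‖(WithLp.equiv 2 (n → ℂ)).symm u‖
          * ‖(WithLp.equiv 2 (n → ℂ)).symm v‖ := by
  have hexp : ∀ (t κ : ℝ) (w : n → ℂ), H *ᵥ w = (κ : ℂ) • w →
      NormedSpace.exp (t • H) *ᵥ w = (Real.exp (t * κ) : ℂ) • w := by
    intro t κ w hw
    rw [← Complex.coe_smul, Matrix.exp_smul_mulVec_of_mulVec_eq_smul hw, ← Complex.exp_eq_exp_ℂ,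
      Complex.ofReal_exp, Complex.ofReal_mul]
  have hu' : (NormedSpace.exp (lam • H))ᴴ *ᵥ u = (Real.exp (lam * μ) : ℂ) • u := by
    rw [(hH.smul (IsSelfAdjoint.all lam)).exp.eq]
    exact hexp lam μ u hu
  have htilt : star u ⬝ᵥ (NormedSpace.exp (lam • H) * A * NormedSpace.exp ((-lam) • H)) *ᵥ v
      = Real.exp (lam * (μ - ν)) * (star u ⬝ᵥ A *ᵥ v) := by
    rw [Matrix.star_dotProduct_mul_mul_mulVec hu' (hexp (-lam) ν v hv), Complex.star_def,
      Complex.conj_ofReal, ← Complex.ofReal_mul, ← Real.exp_add]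
    ring_nf
  calc ‖star u ⬝ᵥ A *ᵥ v‖
      = Real.exp (-lam * (μ - ν)) * ‖star u ⬝ᵥ
          (NormedSpace.exp (lam • H) * A * NormedSpace.exp ((-lam) • H)) *ᵥ v‖ := by
        rw [htilt, norm_mul, Complex.norm_real, Real.norm_of_nonneg (Real.exp_pos _).le,
          ← mul_assoc, ← Real.exp_add, neg_mul, neg_add_cancel, Real.exp_zero, one_mul]
    _ ≤ _ := by
        grw [Matrix.norm_star_dotProduct_mulVec_le]
        exact le_of_eq (by ring)

/-- exponential tilt. For a Hermitian `H`, any matrix `A`,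
`λ ≥ 0`, and eigenpairs `(μ, u)`, `(ν, v)` of `H`, the transition matrix element
satisfies `|⟨u, A v⟩| ≤ e^{-λ(μ-ν)} ‖e^{λH} A e^{-λH}‖ ‖u‖ ‖v‖`, where vector
norms are Euclidean (ℓ²) norms. -/
theorem transition_exponential_tilt
    {n : Type*} [Fintype n] [DecidableEq n] [Nonempty n]
    (H A : Matrix n n ℂ) (hH : H.IsHermitian)
    (lam : ℝ) (hlam : 0 ≤ lam)
    (μ ν : ℝ) (u v : n → ℂ)
    (hu : H.mulVec u = (μ : ℂ) • u) (hv : H.mulVec v = (ν : ℂ) • v) :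
    ‖star u ⬝ᵥ A.mulVec v‖
      ≤ Real.exp (-lam * (μ - ν))
          * ‖NormedSpace.exp (lam • H) * A * NormedSpace.exp ((-lam) • H)‖
          * ‖(WithLp.equiv 2 (n → ℂ)).symm u‖
          * ‖(WithLp.equiv 2 (n → ℂ)).symm v‖ :=
  transition_exponential_tilt_general H A hH lam μ ν u v hu hv
end

section
/- Let ι be a finite type, let h : ι → Matrix n n ℂ be a family of pairwise commuting matrices (Commute (h a) (h b) for all a, b), set H = ∑_a h a, and let A be a matrix such that Commute A (h a) for all a outside a subset T ⊆ ι. Let R = ∑_{a ∈ T} ‖h a‖. Then for every natural number l, the l-fold iterated commutator satisfies ‖ad_H^l(A)‖ ≤ (2 * R)^l * ‖A‖, where ad_H(X) := ⁅X, H⁆ = X*H - H*X. -/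
open scoped Matrix.Norms.L2Operator

/-!
Split `H = B + C` with `B = ∑_{a ∈ T} h a` and `C` the sum of the remaining terms. Since `C`
commutes with `A` and with `B`, it commutes with every iterated commutator of `A` with `B`, so
`ad_H^l A = ad_B^l A`. Each application of `ad_B` multiplies the norm by at most `2‖B‖ ≤ 2R`.
-/

section Ring

variable {R : Type*} [Ring R]

theorem mul_add_sub_add_mul_of_commute {X B C : R} (hXC : Commute X C) :
    X * (B + C) - (B + C) * X = X * B - B * X := by
  rw [mul_add, add_mul, hXC.eq]
  abel

theorem commute_iterate_mul_sub_mul {A B C : R} (hBC : Commute B C) (hAC : Commute A C)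
    (l : ℕ) : Commute ((fun X => X * B - B * X)^[l] A) C := by
  induction l with
  | zero => exact hAC
  | succ l ih =>
    rw [Function.iterate_succ_apply']
    exact (ih.mul_left hBC).sub_left (hBC.mul_left ih)

theorem iterate_mul_add_sub_add_mul_of_commute {A B C : R} (hBC : Commute B C)
    (hAC : Commute A C) (l : ℕ) :
    (fun X => X * (B + C) - (B + C) * X)^[l] A = (fun X => X * B - B * X)^[l] A := by
  induction l with
  | zero => rfl
  | succ l ih =>
    rw [Function.iterate_succ_apply', Function.iterate_succ_apply', ih]
    exact mul_add_sub_add_mul_of_commute (commute_iterate_mul_sub_mul hBC hAC l)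

end Ring

section NormedRing

variable {R : Type*} [NonUnitalNormedRing R]

theorem norm_mul_sub_mul_le (X B : R) : ‖X * B - B * X‖ ≤ 2 * ‖B‖ * ‖X‖ :=
  calc ‖X * B - B * X‖ ≤ ‖X‖ * ‖B‖ + ‖B‖ * ‖X‖ :=
        (norm_sub_le _ _).trans (add_le_add (norm_mul_le _ _) (norm_mul_le _ _))
    _ = 2 * ‖B‖ * ‖X‖ := by ring

theorem norm_iterate_mul_sub_mul_le (A B : R) (l : ℕ) :
    ‖(fun X => X * B - B * X)^[l] A‖ ≤ (2 * ‖B‖) ^ l * ‖A‖ := by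
  induction l with
  | zero => simp
  | succ l ih =>
    rw [Function.iterate_succ_apply', pow_succ', mul_assoc]
    exact (norm_mul_sub_mul_le _ _).trans (by gcongr)

end NormedRing

theorem iterated_commutator_bound_general
    {n : Type*} [Fintype n] [DecidableEq n]
    {ι : Type*} [Fintype ι]
    (h : ι → Matrix n n ℂ)
    (hcomm : ∀ a b, Commute (h a) (h b))
    (H : Matrix n n ℂ) (hH : H = ∑ a, h a)
    (A : Matrix n n ℂ) (T : Finset ι)
    (hA : ∀ a ∉ T, Commute A (h a))
    (R : ℝ) (hR : R = ∑ a ∈ T, ‖h a‖)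
    (l : ℕ) :
    ‖(fun X : Matrix n n ℂ => X * H - H * X)^[l] A‖ ≤ (2 * R) ^ l * ‖A‖ := by
  classical
  have hBC : Commute (∑ a ∈ T, h a) (∑ a ∈ Tᶜ, h a) :=
    .sum_left _ _ _ fun a _ => .sum_right _ _ _ fun b _ => hcomm a b
  have hAC : Commute A (∑ a ∈ Tᶜ, h a) :=
    .sum_right _ _ _ fun a ha => hA a (Finset.mem_compl.mp ha)
  have hB : ‖∑ a ∈ T, h a‖ ≤ R := hR ▸ norm_sum_le _ _
  rw [hH, ← Finset.sum_add_sum_compl T, iterate_mul_add_sub_add_mul_of_commute hBC hAC]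
  calc _ ≤ (2 * ‖∑ a ∈ T, h a‖) ^ l * ‖A‖ := norm_iterate_mul_sub_mul_le _ _ _
    _ ≤ (2 * R) ^ l * ‖A‖ := by gcongr

/-- For a commuting family `h` with sum `H` and an operator `A`
commuting with all terms outside `T`, the `l`-fold iterated commutator
`ad_H^l(A)`, with `ad_H(X) = X*H - H*X`, is bounded in norm by `(2R)^l ‖A‖`
where `R = ∑_{a ∈ T} ‖h a‖`. -/
theorem iterated_commutator_bound
    {n : Type*} [Fintype n] [DecidableEq n] [Nonempty n]
    {ι : Type*} [Fintype ι]
    (h : ι → Matrix n n ℂ)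
    (hcomm : ∀ a b, Commute (h a) (h b))
    (H : Matrix n n ℂ) (hH : H = ∑ a, h a)
    (A : Matrix n n ℂ) (T : Finset ι)
    (hA : ∀ a ∉ T, Commute A (h a))
    (R : ℝ) (hR : R = ∑ a ∈ T, ‖h a‖)
    (l : ℕ) :
    ‖(fun X : Matrix n n ℂ => X * H - H * X)^[l] A‖ ≤ (2 * R) ^ l * ‖A‖ :=
  iterated_commutator_bound_general h hcomm H hH A T hA R hR l
end

section
/- Let ι be a finite type, let h : ι → Matrix n n ℂ be a family of pairwise commuting matrices (Commute (h a) (h b) for all a, b), set H = ∑_a h a, and let A be a matrix such that Commute A (h a) for all a outside a subset T ⊆ ι. Let R = ∑_{a ∈ T} ‖h a‖. Then for every real λ, ‖Matrix.exp (λ • H) * A * Matrix.exp ((-λ) • H)‖ ≤ Real.exp (2 * |λ| * R) * ‖A‖. -/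
/-!
Split `H = H_T + H_O` with `H_T = ∑_{a ∈ T} h a` and `H_O` the sum of the remaining terms.
Since the family commutes, `e^{λH} = e^{λH_T} e^{λH_O}`, and since `A` commutes with `H_O`, the
factors `e^{±λH_O}` cancel around `A`. What remains, `e^{λH_T} A e^{-λH_T}`, has norm at most
`e^{|λ|‖H_T‖} ‖A‖ e^{|λ|‖H_T‖}`, and `‖H_T‖ ≤ R`.
-/

open scoped Matrix.Norms.L2Operator
open NormedSpace

namespace NormedSpace

variable {𝔸 : Type*} [NormedRing 𝔸] [NormedAlgebra ℚ 𝔸]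

theorem norm_exp_le_exp_norm [NormOneClass 𝔸] (x : 𝔸) : ‖exp x‖ ≤ Real.exp ‖x‖ := by
  rw [exp_eq_tsum ℚ, Real.exp_eq_exp_ℝ, exp_eq_tsum ℝ]
  refine (norm_tsum_le_tsum_norm (norm_expSeries_summable' x)).trans ?_
  refine Summable.tsum_le_tsum (fun m => ?_) (norm_expSeries_summable' x)
    (expSeries_summable' (𝕂 := ℝ) ‖x‖)
  rw [norm_smul, smul_eq_mul, norm_inv, ← Rat.norm_cast_real]
  push_cast
  rw [Real.norm_natCast]
  gcongr
  exact norm_pow_le x m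

theorem norm_exp_mul_mul_exp_neg_le [NormOneClass 𝔸] (x a : 𝔸) :
    ‖exp x * a * exp (-x)‖ ≤ Real.exp (2 * ‖x‖) * ‖a‖ :=
  calc ‖exp x * a * exp (-x)‖ ≤ ‖exp x‖ * ‖a‖ * ‖exp (-x)‖ := norm_mul₃_le
    _ ≤ Real.exp ‖x‖ * ‖a‖ * Real.exp ‖-x‖ := by
      gcongr <;> exact norm_exp_le_exp_norm _
    _ = Real.exp (2 * ‖x‖) * ‖a‖ := by
      rw [norm_neg, mul_right_comm, ← Real.exp_add, two_mul]

theorem exp_add_mul_mul_exp_neg_add_of_commute [CompleteSpace 𝔸] {x y a : 𝔸}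
    (hxy : Commute x y) (hay : Commute a y) :
    exp (x + y) * a * exp (-(x + y)) = exp x * a * exp (-x) := by
  have hconj : exp y * a * exp (-y) = a := by
    simpa using hay.neg_right.exp_neg_mul_mul_exp_eq_self
  calc exp (x + y) * a * exp (-(x + y))
      = exp x * (exp y * a * exp (-y)) * exp (-x) := by
        rw [exp_add_of_commute hxy, neg_add_rev, exp_add_of_commute hxy.neg_left.neg_right.symm]
        simp only [mul_assoc]
    _ = exp x * a * exp (-x) := by rw [hconj]

end NormedSpace

theorem exp_conj_norm_bound_general
    {n : Type*} [Fintype n] [DecidableEq n]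
    {ι : Type*} [Fintype ι]
    (h : ι → Matrix n n ℂ)
    (hcomm : ∀ a b, Commute (h a) (h b))
    (H : Matrix n n ℂ) (hH : H = ∑ a, h a)
    (A : Matrix n n ℂ) (T : Finset ι)
    (hA : ∀ a ∉ T, Commute A (h a))
    (R : ℝ) (hR : R = ∑ a ∈ T, ‖h a‖)
    (lam : ℝ) :
    ‖NormedSpace.exp (lam • H) * A * NormedSpace.exp ((-lam) • H)‖
      ≤ Real.exp (2 * |lam| * R) * ‖A‖ := by
  classical
  -- the exponential's Banach-algebra lemmas are stated over `ℚ`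
  let +nondep : NormedAlgebra ℚ (Matrix n n ℂ) := .restrictScalars ℚ ℂ _
  -- `‖1‖ = 1` for the operator norm needs `n` nonempty; otherwise every matrix is `0`
  cases isEmpty_or_nonempty n
  · simp [Subsingleton.elim A 0]
  set HT := ∑ a ∈ T, h a
  set HO := ∑ a ∈ Tᶜ, h a
  have hsplit : lam • H = lam • HT + lam • HO := by
    rw [hH, ← smul_add, Finset.sum_add_sum_compl]
  have hTO : Commute HT HO :=
    .sum_right _ _ _ fun b _ => .sum_left _ _ _ fun a _ => hcomm a b
  have hAO : Commute A HO := .sum_right _ _ _ fun a ha => hA a (Finset.mem_compl.mp ha)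
  have hHT : ‖lam • HT‖ ≤ |lam| * R := by
    rw [norm_smul, Real.norm_eq_abs, hR]
    gcongr
    exact norm_sum_le _ _
  rw [neg_smul, hsplit, exp_add_mul_mul_exp_neg_add_of_commute
    ((hTO.smul_left lam).smul_right lam) (hAO.smul_right lam)]
  calc _ ≤ Real.exp (2 * ‖lam • HT‖) * ‖A‖ := norm_exp_mul_mul_exp_neg_le _ _
    _ ≤ Real.exp (2 * |lam| * R) * ‖A‖ := by
      rw [mul_assoc]
      gcongr

/-- For a commuting family `h` with sum `H` and an operator `A`
commuting with all terms outside `T` (with `R = ∑_{a ∈ T} ‖h a‖`), the conjugation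
by the matrix exponential satisfies `‖e^{λH} A e^{-λH}‖ ≤ e^{2|λ|R} ‖A‖`. -/
theorem exp_conj_norm_bound
    {n : Type*} [Fintype n] [DecidableEq n] [Nonempty n]
    {ι : Type*} [Fintype ι]
    (h : ι → Matrix n n ℂ)
    (hcomm : ∀ a b, Commute (h a) (h b))
    (H : Matrix n n ℂ) (hH : H = ∑ a, h a)
    (A : Matrix n n ℂ) (T : Finset ι)
    (hA : ∀ a ∉ T, Commute A (h a))
    (R : ℝ) (hR : R = ∑ a ∈ T, ‖h a‖)
    (lam : ℝ) :
    ‖NormedSpace.exp (lam • H) * A * NormedSpace.exp ((-lam) • H)‖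
      ≤ Real.exp (2 * |lam| * R) * ‖A‖ :=
  exp_conj_norm_bound_general h hcomm H hH A T hA R hR lam
end

section
/- (Spectral discretization.) Let C be a Hermitian matrix in Matrix n n ℂ and let ε > 0. Then there exists a Hermitian matrix C' such that: (i) Commute C C'; (ii) ‖C - C'‖ ≤ ε / 2; and (iii) every eigenvalue of C' is of the form m * ε + ε / 2 for some integer m. Moreover C' can be chosen so that every eigenvector of C is an eigenvector of C'. -/
/-!
Take `C' = f(C)` in the continuous functional calculus, where `f` sends each point of the cell
`[mε, mε + ε)` to its midpoint. Every function is continuous on the finite spectrum of a matrix, so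
`f(C)` is a Hermitian function of `C` and commutes with it; by the spectral mapping theorem its
eigenvalues are values of `f`; and since the calculus is isometric for the operator norm,
`‖C - f(C)‖ = max_{x ∈ σ(C)} |x - f x| ≤ ε / 2`. An eigenvector of `C` for `μ` is one of `f(C)`
for `f μ`, because `f x = f μ + g x * (x - μ)` with `g x = (f x - f μ) / (x - μ)`.
-/

open scoped Matrix.Norms.L2Operator

noncomputable def gridMidpoint (ε x : ℝ) : ℝ := ⌊x / ε⌋ * ε + ε / 2

lemma abs_sub_gridMidpoint_le {ε : ℝ} (hε : 0 < ε) (x : ℝ) : |x - gridMidpoint ε x| ≤ ε / 2 := by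
  have h₀ := Int.sub_floor_div_mul_nonneg x hε
  have h₁ := Int.sub_floor_div_mul_lt x hε
  rw [gridMidpoint, abs_le]
  constructor <;> linarith

namespace Matrix

variable {n : Type*} [Fintype n] [DecidableEq n]

lemma mem_spectrum_of_mulVec_eq_smul {K : Type*} [Field K] {A : Matrix n n K}
    {μ : K} {v : n → K} (hv : v ≠ 0) (h : A *ᵥ v = μ • v) : μ ∈ spectrum K A :=
  spectrum_toLin' A ▸
    (Module.End.hasEigenvalue_of_hasEigenvector ⟨Module.End.mem_eigenspace_iff.2 h, hv⟩).mem_spectrum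

lemma IsHermitian.cfc_mulVec_of_mulVec_eq_smul {𝕜 : Type*} [RCLike 𝕜] {A : Matrix n n 𝕜}
    (hA : A.IsHermitian) (f : ℝ → ℝ) {μ : ℝ} {v : n → 𝕜} (h : A *ᵥ v = (μ : 𝕜) • v) :
    cfc f A *ᵥ v = (f μ : 𝕜) • v := by
  have hA' : IsSelfAdjoint A := hA
  have hcont (g : ℝ → ℝ) : ContinuousOn g (spectrum ℝ A) := A.finite_real_spectrum.continuousOn g
  set g : ℝ → ℝ := fun x => (f x - f μ) / (x - μ)
  -- At `x = μ` the junk value `g μ = 0` is harmless: the factor `x - μ` vanishes there.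
  have hfg : f = fun x => f μ + g x * (x - μ) := by
    funext x
    rcases eq_or_ne x μ with rfl | hx
    · simp
    · simp only [g]
      field_simp [sub_ne_zero.2 hx]
      ring
  have hcfc : cfc f A = algebraMap ℝ _ (f μ) + cfc g A * (A - algebraMap ℝ _ μ) := by
    rw [congrArg (cfc · A) hfg, cfc_add _ _ _ (hcont _) (hcont _), cfc_const _ _ hA',
      cfc_mul _ _ _ (hcont _) (hcont _), cfc_sub _ _ _ (hcont _) (hcont _), cfc_id' _ _ hA',
      cfc_const _ _ hA']
  have hv : (A - algebraMap ℝ _ μ) *ᵥ v = 0 := by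
    rw [sub_mulVec, h, Algebra.algebraMap_eq_smul_one, smul_mulVec, one_mulVec, sub_eq_zero,
      RCLike.real_smul_eq_coe_smul (K := 𝕜)]
  rw [hcfc, add_mulVec, ← mulVec_mulVec, hv, mulVec_zero, add_zero,
    Algebra.algebraMap_eq_smul_one, smul_mulVec, one_mulVec, RCLike.real_smul_eq_coe_smul (K := 𝕜)]

end Matrix

open Matrix in
theorem spectral_discretization_general
    {n : Type*} [Fintype n] [DecidableEq n]
    (C : Matrix n n ℂ) (hC : C.IsHermitian) (ε : ℝ) (hε : 0 < ε) :
    ∃ C' : Matrix n n ℂ,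
      C'.IsHermitian ∧
      Commute C C' ∧
      ‖C - C'‖ ≤ ε / 2 ∧
      (∀ (μ : ℝ) (v : n → ℂ), v ≠ 0 → C'.mulVec v = (μ : ℂ) • v →
        ∃ m : ℤ, μ = m * ε + ε / 2) ∧
      (∀ (μ : ℂ) (v : n → ℂ), C.mulVec v = μ • v →
        ∃ μ' : ℂ, C'.mulVec v = μ' • v) := by
  have hC' : IsSelfAdjoint C := hC
  have hcont (f : ℝ → ℝ) : ContinuousOn f (spectrum ℝ C) := C.finite_real_spectrum.continuousOn f
  refine ⟨cfc (gridMidpoint ε) C, cfc_predicate _ C, ((Commute.refl C).cfc_real _).symm, ?_, ?_, ?_⟩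
  · nth_rw 1 [← cfc_id' ℝ C]
    rw [← cfc_sub _ _ _ (hcont _) (hcont _)]
    exact norm_cfc_le (by positivity) fun x _ => abs_sub_gridMidpoint_le hε x
  · intro μ v hv h
    have hμ : μ ∈ spectrum ℝ (cfc (gridMidpoint ε) C) :=
      (spectrum.algebraMap_mem_iff ℂ).1 (mem_spectrum_of_mulVec_eq_smul hv h)
    obtain ⟨x, -, rfl⟩ := cfc_map_spectrum (gridMidpoint ε) C hC' (hcont _) ▸ hμ
    exact ⟨⌊x / ε⌋, rfl⟩
  · intro μ v h
    by_cases hv : v = 0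
    · exact ⟨0, by simp [hv]⟩
    have hμ : μ = μ.re := hC'.mem_spectrum_eq_re (mem_spectrum_of_mulVec_eq_smul hv h)
    exact ⟨_, hC.cfc_mulVec_of_mulVec_eq_smul _ (hμ ▸ h)⟩

/-- spectral discretization. Given a Hermitian matrix `C` and
`ε > 0`, there is a Hermitian matrix `C'` commuting with `C`, with
`‖C - C'‖ ≤ ε / 2`, whose every eigenvalue is of the form `m ε + ε/2` for an
integer `m`, and such that every eigenvector of `C` is an eigenvector of `C'`. -/
theorem spectral_discretization
    {n : Type*} [Fintype n] [DecidableEq n] [Nonempty n]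
    (C : Matrix n n ℂ) (hC : C.IsHermitian) (ε : ℝ) (hε : 0 < ε) :
    ∃ C' : Matrix n n ℂ,
      C'.IsHermitian ∧
      Commute C C' ∧
      ‖C - C'‖ ≤ ε / 2 ∧
      (∀ (μ : ℝ) (v : n → ℂ), v ≠ 0 → C'.mulVec v = (μ : ℂ) • v →
        ∃ m : ℤ, μ = m * ε + ε / 2) ∧
      (∀ (μ : ℂ) (v : n → ℂ), C.mulVec v = μ • v →
        ∃ μ' : ℂ, C'.mulVec v = μ' • v) :=
  spectral_discretization_general C hC ε hε
end

section
/- Fix N ≥ 1 and let H_CS = ∑_{i=1}^N σx^{(0)} * σx^{(i)} and H_CS' = ∑_{j=1}^N σy^{(0)} * σx^{(j)} be the two central-spin interaction operators on N+1 qubits. Then ⁅H_CS, H_CS'⁆ = (2 * Complex.I) • (σz^{(0)} * (∑_{i=1}^N σx^{(i)})^2). -/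
open scoped Matrix.Norms.L2Operator
open scoped Matrix

def siteOp {N : ℕ} (P : Matrix (Fin 2) (Fin 2) ℂ) (j : Fin (N + 1)) :
    Matrix (Fin (N + 1) → Fin 2) (Fin (N + 1) → Fin 2) ℂ :=
  fun f g => P (f j) (g j) * ∏ k ∈ Finset.univ.erase j, (if f k = g k then (1 : ℂ) else 0)

def σx : Matrix (Fin 2) (Fin 2) ℂ := !![0, 1; 1, 0]
def σy : Matrix (Fin 2) (Fin 2) ℂ := !![0, -Complex.I; Complex.I, 0]
def σz : Matrix (Fin 2) (Fin 2) ℂ := !![1, 0; 0, -1]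

-- Site `0` is the central spin; `per i` is the peripheral site `i + 1`.
def per {N : ℕ} (i : Fin N) : Fin (N + 1) := i.succ

/-!
With `X = ∑ᵢ σx⁽ⁱ⁾` over the peripheral sites, both interaction operators factor as
`σx⁽⁰⁾ X` and `σy⁽⁰⁾ X`. Operators on distinct sites commute, so `X` commutes with the central
factors and the commutator collapses to `⁅σx, σy⁆⁽⁰⁾ X² = 2i σz⁽⁰⁾ X²`.
-/

open Function

section SiteOp

variable {N : ℕ}

lemma siteOp_apply (P : Matrix (Fin 2) (Fin 2) ℂ) (j : Fin (N + 1))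
    (f g : Fin (N + 1) → Fin 2) :
    siteOp P j f g = if ∀ k ≠ j, f k = g k then P (f j) (g j) else 0 := by
  rw [siteOp, Finset.prod_boole, mul_ite, mul_one, mul_zero]
  simp only [Finset.mem_erase, ne_eq, Finset.mem_univ, and_true]

lemma siteOp_apply_eq_sum_update (P : Matrix (Fin 2) (Fin 2) ℂ) (j : Fin (N + 1))
    (f g : Fin (N + 1) → Fin 2) :
    siteOp P j f g = ∑ b, if update f j b = g then P (f j) b else 0 := by
  simp only [siteOp_apply, update_eq_iff, ite_and, Finset.sum_ite_eq', Finset.mem_univ, if_true]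

lemma siteOp_mul_apply (P : Matrix (Fin 2) (Fin 2) ℂ) (j : Fin (N + 1))
    (M : Matrix (Fin (N + 1) → Fin 2) (Fin (N + 1) → Fin 2) ℂ) (f g : Fin (N + 1) → Fin 2) :
    (siteOp P j * M) f g = ∑ b, P (f j) b * M (update f j b) g := by
  simp only [Matrix.mul_apply, siteOp_apply_eq_sum_update, Finset.sum_mul, ite_mul, zero_mul]
  rw [Finset.sum_comm]
  simp

lemma siteOp_mul_siteOp (P Q : Matrix (Fin 2) (Fin 2) ℂ) (j : Fin (N + 1)) :
    siteOp P j * siteOp Q j = siteOp (P * Q) j := by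
  ext f g
  rw [siteOp_mul_apply, siteOp_apply, Matrix.mul_apply]
  simp only [siteOp_apply, update_self]
  split_ifs with h <;> simp +contextual [h, update_of_ne]

lemma siteOp_mul_siteOp_apply_of_ne (P Q : Matrix (Fin 2) (Fin 2) ℂ) {j k : Fin (N + 1)}
    (hjk : j ≠ k) (f g : Fin (N + 1) → Fin 2) :
    (siteOp P j * siteOp Q k) f g =
      if ∀ m, m ≠ j → m ≠ k → f m = g m then P (f j) (g j) * Q (f k) (g k) else 0 := by
  have h_update (b : Fin 2) :
      (∀ m ≠ k, update f j b m = g m) ↔ b = g j ∧ ∀ m, m ≠ j → m ≠ k → f m = g m :=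
    (forall_update_iff f fun m y => m ≠ k → y = g m).trans (by simp only [hjk, ne_eq,
      not_false_eq_true, forall_const])
  simp only [siteOp_mul_apply, siteOp_apply, update_of_ne hjk.symm, h_update, ite_and,
    mul_ite, mul_zero, Finset.sum_ite_eq', Finset.mem_univ, if_true]

lemma siteOp_commute (P Q : Matrix (Fin 2) (Fin 2) ℂ) {j k : Fin (N + 1)}
    (hjk : j ≠ k) : Commute (siteOp P j) (siteOp Q k) := by
  ext f g
  rw [siteOp_mul_siteOp_apply_of_ne P Q hjk, siteOp_mul_siteOp_apply_of_ne Q P hjk.symm]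
  simp only [mul_comm (P _ _), fun m => @imp.swap (m ≠ j) (m ≠ k)]

lemma siteOp_smul (c : ℂ) (P : Matrix (Fin 2) (Fin 2) ℂ) (j : Fin (N + 1)) :
    siteOp (c • P) j = c • siteOp P j := by
  ext f g
  simp only [siteOp, Matrix.smul_apply, smul_eq_mul, mul_assoc]

lemma siteOp_sub (P Q : Matrix (Fin 2) (Fin 2) ℂ) (j : Fin (N + 1)) :
    siteOp (P - Q) j = siteOp P j - siteOp Q j := by
  ext f g
  simp only [siteOp, Matrix.sub_apply, sub_mul]

lemma siteOp_lie (P Q : Matrix (Fin 2) (Fin 2) ℂ) (j : Fin (N + 1)) :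
    ⁅siteOp P j, siteOp Q j⁆ = siteOp ⁅P, Q⁆ j := by
  rw [Ring.lie_def, Ring.lie_def, siteOp_sub, siteOp_mul_siteOp, siteOp_mul_siteOp]

lemma commute_siteOp_zero_sum_siteOp_per (P Q : Matrix (Fin 2) (Fin 2) ℂ) :
    Commute (siteOp P 0) (∑ i : Fin N, siteOp Q (per i)) :=
  Commute.sum_right _ _ _ fun i _ => siteOp_commute P Q (Fin.succ_ne_zero i).symm

end SiteOp

lemma pauli_lie_x_y : ⁅σx, σy⁆ = (2 * Complex.I) • σz := by
  ext a b
  fin_cases a <;> fin_cases b <;>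
    simp [Ring.lie_def, σx, σy, σz] <;> ring

lemma lie_mul_mul_of_commute {R : Type*} [Ring R] {a b x : R} (ha : Commute a x)
    (hb : Commute b x) : ⁅a * x, b * x⁆ = ⁅a, b⁆ * x ^ 2 := by
  have mul_mul_eq {c d : R} (hd : Commute d x) : c * x * (d * x) = c * d * x ^ 2 := by
    rw [sq, mul_assoc, ← mul_assoc x, ← hd.eq]
    simp only [mul_assoc]
  rw [Ring.lie_def, Ring.lie_def, sub_mul, mul_mul_eq hb, mul_mul_eq ha]

theorem central_spin_commutator_general (N : ℕ) :
    ⁅∑ i : Fin N, siteOp σx 0 * siteOp σx (per i),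
      ∑ j : Fin N, siteOp σy 0 * siteOp σx (per j)⁆
      = (2 * Complex.I) • (siteOp σz 0 * (∑ i : Fin N, siteOp σx (per i)) ^ 2) := by
  rw [← Finset.mul_sum, ← Finset.mul_sum,
    lie_mul_mul_of_commute (commute_siteOp_zero_sum_siteOp_per _ _)
      (commute_siteOp_zero_sum_siteOp_per _ _),
    siteOp_lie, pauli_lie_x_y, siteOp_smul, smul_mul_assoc]

/-- The commutator of the two central-spin interaction operators
`H_CS = ∑_{i=1}^N σx⁽⁰⁾ σx⁽ⁱ⁾` and `H_CS' = ∑_{j=1}^N σy⁽⁰⁾ σx⁽ʲ⁾` equals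
`2i σz⁽⁰⁾ (∑_{i=1}^N σx⁽ⁱ⁾)²`. -/
theorem central_spin_commutator (N : ℕ) (hN : 1 ≤ N) :
    ⁅∑ i : Fin N, siteOp σx 0 * siteOp σx (per i),
      ∑ j : Fin N, siteOp σy 0 * siteOp σx (per j)⁆
      = (2 * Complex.I) • (siteOp σz 0 * (∑ i : Fin N, siteOp σx (per i)) ^ 2) :=
  central_spin_commutator_general N
end

section
/- (Power is bounded by the commutator norm in the direct charging protocol.) Let H_B and H_C be Hermitian matrices in Matrix n n ℂ and let ψ : n → ℂ be a unit vector. For t : ℝ set ψ_t = (Matrix.exp ((-(t : ℂ) * Complex.I) • H_C)).mulVec ψ and define the stored energy E(t) = Complex.re (star ψ_t ⬝ᵥ (H_B.mulVec ψ_t)). Then E is differentiable on ℝ, and for every t the instantaneous power satisfies |deriv E t| ≤ ‖⁅H_B, H_C⁆‖. -/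
/-!
Pass to the Heisenberg picture: with `U t = exp (t • A)`, `A = -i H_C`, the energy is
`E t = Re ⟨ψ, (U t)ᴴ H_B (U t) ψ⟩`, whose derivative is `Re ⟨ψ, (U t)ᴴ (Aᴴ H_B + H_B A) (U t) ψ⟩`.
Since `H_C` is Hermitian, `Aᴴ H_B + H_B A = -i ⁅H_B, H_C⁆` and `U t` is unitary, so in the
C⋆-norm the conjugated operator has norm `‖⁅H_B, H_C⁆‖`, which bounds the expectation in the
unit state `ψ`.
-/

open scoped Matrix.Norms.L2Operator
open scoped Matrix

open NormedSpace in
theorem hasDerivAt_star_exp_smul_mul_mul_exp_smul {𝔸 : Type*} [NormedRing 𝔸]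
    [NormedAlgebra ℝ 𝔸] [CompleteSpace 𝔸] [StarRing 𝔸] [ContinuousStar 𝔸] [StarModule ℝ 𝔸]
    (A B : 𝔸) (t : ℝ) :
    HasDerivAt (fun s : ℝ => star (exp (s • A)) * B * exp (s • A))
      (star (exp (t • A)) * (star A * B + B * A) * exp (t • A)) t := by
  have hU := hasDerivAt_exp_smul_const' A t
  convert (hU.star.mul_const B).fun_mul hU using 1
  rw [star_mul]
  noncomm_ring

theorem star_neg_I_smul_mul_add_mul_neg_I_smul {𝔸 : Type*} [Ring 𝔸] [StarRing 𝔸]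
    [Algebra ℂ 𝔸] [StarModule ℂ 𝔸] {C : 𝔸} (hC : IsSelfAdjoint C) (B : 𝔸) :
    star ((-Complex.I) • C) * B + B * ((-Complex.I) • C) = (-Complex.I) • ⁅B, C⁆ := by
  rw [star_smul, hC.star_eq, Ring.lie_def]
  simp only [star_neg, Complex.star_def, Complex.conj_I, smul_mul_assoc, mul_smul_comm]
  module

open NormedSpace in
theorem exp_smul_neg_I_smul_mem_unitary {𝔸 : Type*} [NormedRing 𝔸] [NormedAlgebra ℂ 𝔸]
    [CompleteSpace 𝔸] [StarRing 𝔸] [ContinuousStar 𝔸] [StarModule ℂ 𝔸]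
    {C : 𝔸} (hC : IsSelfAdjoint C) (t : ℝ) :
    exp (t • (-Complex.I) • C) ∈ unitary 𝔸 := by
  let : NormedAlgebra ℚ 𝔸 := .restrictScalars ℚ ℂ 𝔸
  have hI : -Complex.I ∈ skewAdjoint ℂ := by simp [skewAdjoint.mem_iff]
  exact exp_mem_unitary_of_mem_skewAdjoint (skewAdjoint.smul_mem t (hC.smul_mem_skewAdjoint hI))

namespace Matrix

variable {n : Type*} [Fintype n]

theorem star_mulVec_dotProduct_mulVec_mulVec {R : Type*} [CommRing R] [StarRing R]
    (U B : Matrix n n R) (ψ : n → R) :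
    star (U *ᵥ ψ) ⬝ᵥ (B *ᵥ (U *ᵥ ψ)) = star ψ ⬝ᵥ ((Uᴴ * B * U) *ᵥ ψ) := by
  rw [star_mulVec, ← dotProduct_mulVec, mulVec_mulVec, mulVec_mulVec, Matrix.mul_assoc]

theorem norm_star_dotProduct_mulVec_le_s18 [DecidableEq n] (M : Matrix n n ℂ) (ψ : n → ℂ) :
    ‖star ψ ⬝ᵥ (M *ᵥ ψ)‖ ≤ ‖M‖ * ‖WithLp.toLp 2 ψ‖ ^ 2 := by
  calc ‖star ψ ⬝ᵥ (M *ᵥ ψ)‖ = ‖inner ℂ (WithLp.toLp 2 ψ) (WithLp.toLp 2 (M *ᵥ ψ))‖ := by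
        rw [EuclideanSpace.inner_toLp_toLp, dotProduct_comm]
    _ ≤ ‖WithLp.toLp 2 ψ‖ * ‖WithLp.toLp 2 (M *ᵥ ψ)‖ := norm_inner_le_norm _ _
    _ ≤ ‖WithLp.toLp 2 ψ‖ * (‖M‖ * ‖WithLp.toLp 2 ψ‖) := by
        gcongr; exact M.l2_opNorm_mulVec (WithLp.toLp 2 ψ)
    _ = ‖M‖ * ‖WithLp.toLp 2 ψ‖ ^ 2 := by ring

variable [DecidableEq n]

theorem hasDerivAt_re_star_dotProduct_mulVec {M : ℝ → Matrix n n ℂ} {M' : Matrix n n ℂ} {t : ℝ}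
    (hM : HasDerivAt M M' t) (ψ : n → ℂ) :
    HasDerivAt (fun s => (star ψ ⬝ᵥ (M s *ᵥ ψ)).re) (star ψ ⬝ᵥ (M' *ᵥ ψ)).re t := by
  let L : Matrix n n ℂ →ₗ[ℝ] ℝ :=
    { toFun := fun M => (star ψ ⬝ᵥ (M *ᵥ ψ)).re
      map_add' := fun M N => by simp [add_mulVec, dotProduct_add]
      map_smul' := fun c M => by simp [smul_mulVec, dotProduct_smul] }
  exact L.toContinuousLinearMap.hasFDerivAt.comp_hasDerivAt t hM

end Matrix

open NormedSpace Matrix in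
theorem power_le_commutator_norm_general
    {n : Type*} [Fintype n] [DecidableEq n]
    (H_B H_C : Matrix n n ℂ)
    (hC : H_C.IsHermitian)
    (ψ : n → ℂ) (hψ : ‖(WithLp.equiv 2 (n → ℂ)).symm ψ‖ = 1)
    (E : ℝ → ℝ)
    (hE : ∀ t : ℝ,
      E t =
        Complex.re
          (star ((NormedSpace.exp ((-(t : ℂ) * Complex.I) • H_C)).mulVec ψ) ⬝ᵥ
            (H_B.mulVec
              ((NormedSpace.exp ((-(t : ℂ) * Complex.I) • H_C)).mulVec ψ)))) :
    Differentiable ℝ E ∧ ∀ t : ℝ, |deriv E t| ≤ ‖⁅H_B, H_C⁆‖ := by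
  set A : Matrix n n ℂ := (-Complex.I) • H_C
  set U : ℝ → Matrix n n ℂ := fun t => exp (t • A)
  have hA : star A * H_B + H_B * A = (-Complex.I) • ⁅H_B, H_C⁆ :=
    star_neg_I_smul_mul_add_mul_neg_I_smul hC.isSelfAdjoint H_B
  set K : Matrix n n ℂ := (-Complex.I) • ⁅H_B, H_C⁆ with hK
  have hE_heisenberg : E = fun t => (star ψ ⬝ᵥ ((star (U t) * H_B * U t) *ᵥ ψ)).re := by
    funext t
    have hsmul : (-(t : ℂ) * Complex.I) • H_C = t • A := by
      rw [← Complex.coe_smul, smul_smul, neg_mul_comm]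
    rw [hE t, hsmul, star_mulVec_dotProduct_mulVec_mulVec]
    rfl
  have hE_deriv (t : ℝ) : HasDerivAt E (star ψ ⬝ᵥ ((star (U t) * K * U t) *ᵥ ψ)).re t := by
    rw [hE_heisenberg, ← hA]
    exact hasDerivAt_re_star_dotProduct_mulVec (hasDerivAt_star_exp_smul_mul_mul_exp_smul _ _ t) ψ
  refine ⟨fun t => (hE_deriv t).differentiableAt, fun t => ?_⟩
  have hU : U t ∈ unitary (Matrix n n ℂ) := exp_smul_neg_I_smul_mem_unitary hC.isSelfAdjoint t
  rw [(hE_deriv t).deriv]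
  calc _ ≤ ‖star ψ ⬝ᵥ ((star (U t) * K * U t) *ᵥ ψ)‖ := Complex.abs_re_le_norm _
    _ ≤ ‖star (U t) * K * U t‖ * ‖WithLp.toLp 2 ψ‖ ^ 2 := norm_star_dotProduct_mulVec_le_s18 _ _
    _ = ‖⁅H_B, H_C⁆‖ := by
      rw [← WithLp.equiv_symm_apply, hψ, CStarRing.norm_mul_mem_unitary _ hU,
        CStarRing.norm_mem_unitary_mul _ (Unitary.star_mem hU), hK, norm_smul]
      simp

/-- In the direct charging protocol, the battery starts in the
unit state `ψ`, evolves unitarily under the charger Hamiltonian `H_C` as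
`ψ_t = e^{-itH_C} ψ`, and the stored energy is
`E(t) = Re ⟨ψ_t, H_B ψ_t⟩`. Then `E` is differentiable and the instantaneous
power satisfies `|E'(t)| ≤ ‖⁅H_B, H_C⁆‖` for every `t`. -/
theorem power_le_commutator_norm
    {n : Type*} [Fintype n] [DecidableEq n] [Nonempty n]
    (H_B H_C : Matrix n n ℂ)
    (hB : H_B.IsHermitian) (hC : H_C.IsHermitian)
    (ψ : n → ℂ) (hψ : ‖(WithLp.equiv 2 (n → ℂ)).symm ψ‖ = 1)
    (E : ℝ → ℝ)
    (hE : ∀ t : ℝ,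
      E t =
        Complex.re
          (star ((NormedSpace.exp ((-(t : ℂ) * Complex.I) • H_C)).mulVec ψ) ⬝ᵥ
            (H_B.mulVec
              ((NormedSpace.exp ((-(t : ℂ) * Complex.I) • H_C)).mulVec ψ)))) :
    Differentiable ℝ E ∧ ∀ t : ℝ, |deriv E t| ≤ ‖⁅H_B, H_C⁆‖ :=
  power_le_commutator_norm_general H_B H_C hC ψ hψ E hE
end
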